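/- Let G and H be unital associative F-algebras with all triple commutators zero. Let v_1 = g_1 ⊗ 1, v_i = g_i ⊗ h_i for 2 ≤ i ≤ 2m'-1, and v_{2m'} = g_{2m'} ⊗ 1 in G ⊗ H. Then the left-normed commutator [v_1, ..., v_{2m'}] equals [g_1,g_2][g_3,g_4]···[g_{2m'-1},g_{2m'}] ⊗ [h_2,h_3][h_4,h_5]···[h_{2m'-2},h_{2m'-1}]. -/

import Mathlib

open scoped TensorProduct

/-!
In an algebra where all triple commutators vanish, every commutator is central, hence so are the
products `P_j = [g₁, g₂] ⋯ [g_{2j-1}, g_{2j}]` and `Q_j = [h₂, h₃] ⋯ [h_{2j}, h_{2j+1}]`.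
Bracketing a pure tensor one of whose factors is central with `gᵢ ⊗ hᵢ` only takes a commutator
in the other factor. Alternating between the two factors, induction on `j` gives
`[v₁, …, v_{2j+1}] = P_j g_{2j+1} ⊗ Q_j` and `[v₁, …, v_{2j+2}] = P_{j+1} ⊗ Q_j h_{2j+2}`;
the claim is the second identity for `j = m' - 1`, where `v_{2m'}` has second factor `1`.
-/

/-- Left-normed commutator: `lc a [b₁,...,bₙ] = [a, b₁, ..., bₙ]`. -/
def lc {A : Type*} [Ring A] : A → List A → A
  | a, [] => a
  | a, b :: l => lc ⁅a, b⁆ l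

/-- Left-normed commutator of a list; `lcomm [a₁,...,aₙ] = [a₁,...,aₙ]`, `lcomm [] = 0`. -/
def lcomm {A : Type*} [Ring A] : List A → A
  | [] => 0
  | a :: l => lc a l

/-- `Tideal A n` = two-sided ideal of `A` generated by all left-normed commutators of length `n`. -/
def Tideal (A : Type*) [Ring A] (n : ℕ) : TwoSidedIdeal A :=
  TwoSidedIdeal.span {x | ∃ l : List A, l.length = n ∧ x = lcomm l}

/-- `lcommPrefix u k = [u₁, …, u_k]`. -/
def lcommPrefix {A : Type*} [Ring A] (u : ℕ → A) (k : ℕ) : A :=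
  lcomm (List.ofFn fun i : Fin k => u (i + 1))

section LeftNormed

variable {A : Type*} [Ring A]

theorem lc_append_singleton (b : A) : ∀ (a : A) (l : List A), lc a (l ++ [b]) = ⁅lc a l, b⁆
  | _, [] => rfl
  | a, x :: l => lc_append_singleton b ⁅a, x⁆ l

theorem lcomm_append_singleton (b : A) : ∀ {l : List A}, l ≠ [] → lcomm (l ++ [b]) = ⁅lcomm l, b⁆
  | a :: l, _ => lc_append_singleton b a l

theorem lcommPrefix_one (u : ℕ → A) : lcommPrefix u 1 = u 1 := rfl

theorem lcommPrefix_succ (u : ℕ → A) {k : ℕ} (hk : k ≠ 0) :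
    lcommPrefix u (k + 1) = ⁅lcommPrefix u k, u (k + 1)⁆ := by
  rw [lcommPrefix, List.ofFn_succ', List.concat_eq_append,
    lcomm_append_singleton _ (by simpa [List.ofFn_eq_nil_iff] using hk)]
  rfl

theorem lcommPrefix_congr {u u' : ℕ → A} {k : ℕ} (huu' : ∀ i, 1 ≤ i → i ≤ k → u i = u' i) :
    lcommPrefix u k = lcommPrefix u' k := by
  unfold lcommPrefix
  congr 2
  funext i
  exact huu' _ (by omega) (by omega)

theorem lie_mul_left_of_commute {p a x : A} (hp : Commute p x) : ⁅p * a, x⁆ = p * ⁅a, x⁆ := by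
  rw [Ring.lie_def, Ring.lie_def, mul_sub, ← mul_assoc x, ← hp.eq, mul_assoc, mul_assoc]

end LeftNormed

/-- `commProd g j = [g₁, g₂][g₃, g₄] ⋯ [g_{2j-1}, g_{2j}]`. -/
def commProd {A : Type*} [Ring A] (g : ℕ → A) (j : ℕ) : A :=
  (List.ofFn fun i : Fin j => ⁅g (2 * i + 1), g (2 * i + 2)⁆).prod

section CommProd

variable {A : Type*} [Ring A]

theorem commProd_zero (g : ℕ → A) : commProd g 0 = 1 := rfl

theorem commProd_succ (g : ℕ → A) (j : ℕ) :
    commProd g (j + 1) = commProd g j * ⁅g (2 * j + 1), g (2 * j + 2)⁆ := by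
  rw [commProd, List.ofFn_succ', List.prod_concat]
  rfl

theorem commProd_congr {g g' : ℕ → A} {j : ℕ} (hgg' : ∀ i, 1 ≤ i → i ≤ 2 * j → g i = g' i) :
    commProd g j = commProd g' j := by
  unfold commProd
  congr 2
  funext i
  rw [hgg' _ (by omega) (by omega), hgg' _ (by omega) (by omega)]

theorem lie_mem_center (hA : ∀ a b c : A, ⁅⁅a, b⁆, c⁆ = 0) (a b : A) :
    ⁅a, b⁆ ∈ Subring.center A :=
  Subring.mem_center_iff.2 fun c => ((commute_iff_lie_eq.2 (hA a b c)).symm).eq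

theorem commProd_mem_center (hA : ∀ a b c : A, ⁅⁅a, b⁆, c⁆ = 0) (g : ℕ → A) (j : ℕ) :
    commProd g j ∈ Subring.center A :=
  list_prod_mem <| by simp [List.mem_ofFn, lie_mem_center hA]

theorem commute_of_mem_center {z : A} (hz : z ∈ Subring.center A) (x : A) : Commute z x :=
  (Subring.mem_center_iff.1 hz x).symm

end CommProd

section TensorProduct

variable {R : Type*} [CommRing R] {G H : Type*} [Ring G] [Algebra R G] [Ring H] [Algebra R H]

theorem lie_tmul_tmul_of_commute_right {a x : G} {b y : H} (hby : Commute b y) :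
    ⁅a ⊗ₜ[R] b, x ⊗ₜ[R] y⁆ = ⁅a, x⁆ ⊗ₜ[R] (b * y) := by
  rw [Ring.lie_def, Algebra.TensorProduct.tmul_mul_tmul, Algebra.TensorProduct.tmul_mul_tmul,
    ← hby.eq, ← TensorProduct.sub_tmul, Ring.lie_def]

theorem lie_tmul_tmul_of_commute_left {a x : G} {b y : H} (hax : Commute a x) :
    ⁅a ⊗ₜ[R] b, x ⊗ₜ[R] y⁆ = (a * x) ⊗ₜ[R] ⁅b, y⁆ := by
  rw [Ring.lie_def, Algebra.TensorProduct.tmul_mul_tmul, Algebra.TensorProduct.tmul_mul_tmul,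
    ← hax.eq, ← TensorProduct.tmul_sub, Ring.lie_def]

variable (hG : ∀ a b c : G, ⁅⁅a, b⁆, c⁆ = 0) (hH : ∀ a b c : H, ⁅⁅a, b⁆, c⁆ = 0)
  (g : ℕ → G) (h : ℕ → H)
include hG hH

theorem lcommPrefix_tmul_even_of_odd {j : ℕ}
    (hodd : lcommPrefix (fun i => g i ⊗ₜ[R] h i) (2 * j + 1)
      = (commProd g j * g (2 * j + 1)) ⊗ₜ[R] commProd (fun i => h (i + 1)) j) :
    lcommPrefix (fun i => g i ⊗ₜ[R] h i) (2 * j + 2)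
      = commProd g (j + 1) ⊗ₜ[R] (commProd (fun i => h (i + 1)) j * h (2 * j + 2)) := by
  rw [lcommPrefix_succ _ (by omega), hodd, lie_tmul_tmul_of_commute_right
      (commute_of_mem_center (commProd_mem_center hH _ j) _),
    lie_mul_left_of_commute (commute_of_mem_center (commProd_mem_center hG g j) _),
    ← commProd_succ]

theorem lcommPrefix_tmul_odd_succ_of_even {j : ℕ}
    (heven : lcommPrefix (fun i => g i ⊗ₜ[R] h i) (2 * j + 2)
      = commProd g (j + 1) ⊗ₜ[R] (commProd (fun i => h (i + 1)) j * h (2 * j + 2))) :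
    lcommPrefix (fun i => g i ⊗ₜ[R] h i) (2 * (j + 1) + 1)
      = (commProd g (j + 1) * g (2 * (j + 1) + 1))
          ⊗ₜ[R] commProd (fun i => h (i + 1)) (j + 1) := by
  rw [lcommPrefix_succ _ (by omega), show 2 * (j + 1) = 2 * j + 2 by ring, heven,
    lie_tmul_tmul_of_commute_left (commute_of_mem_center (commProd_mem_center hG g _) _),
    lie_mul_left_of_commute (commute_of_mem_center (commProd_mem_center hH _ j) _),
    commProd_succ g]
  exact congrArg _ (commProd_succ _ j).symm

theorem lcommPrefix_tmul_odd (h1 : h 1 = 1) (j : ℕ) :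
    lcommPrefix (fun i => g i ⊗ₜ[R] h i) (2 * j + 1)
      = (commProd g j * g (2 * j + 1)) ⊗ₜ[R] commProd (fun i => h (i + 1)) j := by
  induction j with
  | zero => simp [lcommPrefix_one, commProd_zero, h1]
  | succ j ih =>
    exact lcommPrefix_tmul_odd_succ_of_even hG hH g h (lcommPrefix_tmul_even_of_odd hG hH g h ih)

theorem lcommPrefix_tmul_even (h1 : h 1 = 1) (j : ℕ) :
    lcommPrefix (fun i => g i ⊗ₜ[R] h i) (2 * j + 2)
      = commProd g (j + 1) ⊗ₜ[R] (commProd (fun i => h (i + 1)) j * h (2 * j + 2)) :=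
  lcommPrefix_tmul_even_of_odd hG hH g h (lcommPrefix_tmul_odd hG hH g h h1 j)

end TensorProduct

/-- Corollary 2.3 of [DK17]: with `v₁ = g₁ ⊗ 1`, `vᵢ = gᵢ ⊗ hᵢ` (`2 ≤ i ≤ 2m'-1`),
`v_{2m'} = g_{2m'} ⊗ 1`, one has
`[v₁, …, v_{2m'}] = [g₁,g₂]⋯[g_{2m'-1},g_{2m'}] ⊗ [h₂,h₃]⋯[h_{2m'-2},h_{2m'-1}]`. -/
theorem statement_7 (F : Type*) [Field F]
    (G H : Type*) [Ring G] [Algebra F G] [Ring H] [Algebra F H]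
    (hG : ∀ a b c : G, ⁅⁅a, b⁆, c⁆ = 0) (hH : ∀ a b c : H, ⁅⁅a, b⁆, c⁆ = 0)
    (m' : ℕ) (hm : 1 ≤ m') (g : ℕ → G) (h : ℕ → H)
    (v : ℕ → G ⊗[F] H)
    (hv1 : v 1 = g 1 ⊗ₜ[F] 1)
    (hvmid : ∀ i, 2 ≤ i → i ≤ 2 * m' - 1 → v i = g i ⊗ₜ[F] h i)
    (hvlast : v (2 * m') = g (2 * m') ⊗ₜ[F] 1) :
    lcomm (List.ofFn fun i : Fin (2 * m') => v (i + 1))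
      = (List.ofFn fun i : Fin m' => ⁅g (2 * i + 1), g (2 * i + 2)⁆).prod
          ⊗ₜ[F] (List.ofFn fun i : Fin (m' - 1) => ⁅h (2 * i + 2), h (2 * i + 3)⁆).prod := by
  obtain ⟨n, rfl⟩ : ∃ n, m' = n + 1 := ⟨m' - 1, by omega⟩
  show lcommPrefix v (2 * n + 2) = commProd g (n + 1) ⊗ₜ[F] commProd (fun i => h (i + 1)) n
  let h' : ℕ → H := fun i => if 2 ≤ i ∧ i ≤ 2 * n + 1 then h i else 1
  have hv : ∀ i, 1 ≤ i → i ≤ 2 * n + 2 → v i = g i ⊗ₜ[F] h' i := by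
    intro i hi1 hi2
    obtain rfl | hmid | rfl : i = 1 ∨ (2 ≤ i ∧ i ≤ 2 * n + 1) ∨ i = 2 * n + 2 := by omega
    · simpa [h'] using hv1
    · simp only [h', if_pos hmid, hvmid i hmid.1 (by omega)]
    · simpa [h', mul_add] using hvlast
  have hQ : commProd (fun i => h' (i + 1)) n = commProd (fun i => h (i + 1)) n :=
    commProd_congr fun i hi1 hi2 => if_pos (by omega)
  rw [lcommPrefix_congr hv, lcommPrefix_tmul_even hG hH g h' (if_neg (by omega)) n, hQ,
    show h' (2 * n + 2) = 1 from if_neg (by omega), mul_one]
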